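/- Suppose T is a Hurwitz tree of type (G, 2) with G = Q_{2^{n+1}} (n ≥ 2), δ_T = 0, and Artin character a_T satisfying ⟨a_T, χ₀⟩ = 2 and ⟨a_T, χ₁⟩ = ⟨a_T, χ₂⟩ ≥ 2, where χ_i is the order-2 character of G with kernel containing H_i. Then with B_i = { leaves b : [G_b] = [H_i] } one has |B₁| = |B₂| = 1 and |B₀| ≥ 1. -/

import Mathlib

open Finset

/-- A rooted metric tree: a finite set of vertices with a parent function, a root, a
unique trunk edge at the root, and a nonnegative rational thickness attached to each
edge (recorded at its target vertex), which vanishes exactly at the leaves. -/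
structure MetricRootedTree where
  V : Type
  [fin : Fintype V]
  [deq : DecidableEq V]
  root : V
  parent : V → V
  parent_root : parent root = root
  reaches_root : ∀ v, ∃ n : ℕ, parent^[n] v = root
  trunk : V
  trunk_ne : trunk ≠ root
  trunk_parent : parent trunk = root
  trunk_unique : ∀ w, w ≠ root → parent w = root → w = trunk
  eps : V → ℚ
  eps_nonneg : ∀ v, 0 ≤ eps v
  eps_zero_iff : ∀ v, v ≠ root → (eps v = 0 ↔ ∀ w, parent w = v → w = v)

attribute [instance] MetricRootedTree.fin MetricRootedTree.deq

namespace MetricRootedTree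

variable (T : MetricRootedTree)

/-- `v ≤ w` : there is an oriented path from `v` down to `w`. -/
def le (v w : T.V) : Prop := ∃ n : ℕ, T.parent^[n] w = v

/-- A leaf is a maximal vertex (no children) other than the root. -/
def IsLeaf (v : T.V) : Prop := v ≠ T.root ∧ ∀ w, T.parent w = v → w = v

open Classical in
/-- The set `B` of leaves. -/
noncomputable def leaves : Finset T.V := Finset.univ.filter T.IsLeaf

open Classical in
/-- Inverse distance between two leaves: the sum of the thicknesses of the edges on the
common initial segment of the paths from the root to `b₁` and to `b₂`. -/
noncomputable def idist (b₁ b₂ : T.V) : ℚ :=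
  ∑ v ∈ Finset.univ.filter (fun v => T.le v b₁ ∧ T.le v b₂ ∧ v ≠ T.root), T.eps v

/-- The density of a set of leaves `A` at `b ∈ A`: `d(A,b) = Σ_{b' ∈ A, b' ≠ b} d(b,b')`. -/
noncomputable def density (A : Finset T.V) (b : T.V) : ℚ :=
  ∑ b' ∈ A.erase b, T.idist b b'

open Classical in
/-- `n(A,v) = |{b' ∈ A : b' ≠ b, v ≤ b'}|`. -/
noncomputable def nCount (A : Finset T.V) (b v : T.V) : ℕ :=
  ((A.erase b).filter (fun b' => T.le v b')).card

end MetricRootedTree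

section Characters

open Classical

variable {G : Type} [Group G] [Fintype G]

/-- Inner product of class functions on a finite group. -/
noncomputable def innerCF (χ₁ χ₂ : G → ℂ) : ℂ :=
  (Fintype.card G : ℂ)⁻¹ * ∑ g : G, (starRingEnd ℂ) (χ₁ g) * χ₂ g

/-- Induction of a class function supported on a subgroup `H ≤ G` to `G`. -/
noncomputable def indCF (H : Subgroup G) (f : G → ℂ) : G → ℂ :=
  fun g => (Nat.card H : ℂ)⁻¹ * ∑ x : G, f (x⁻¹ * g * x)

open Classical in
/-- The augmentation character `u_H = r_H - 1_H` of `H`, extended by zero to `G`. -/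
noncomputable def augChar (H : Subgroup G) : G → ℂ :=
  fun h => if h ∈ H then (if h = 1 then (Nat.card H : ℂ) - 1 else -1) else 0

/-- The induced augmentation character `(u_H)^* = Ind_H^G (r_H - 1_H)`. -/
noncomputable def indAug (H : Subgroup G) : G → ℂ := indCF H (augChar H)

open Classical in
/-- The class function `δ_H^mult` of a cyclic `p`-subgroup `H ≤ G` of order `p^m`
(extended by zero to `G`): `δ(σ^a) = -p^(i+1)/(p-1)` for `σ^a ≠ 1` with `i = ord_p a`
(so that `σ^a` has order `p^(m-i)`), and `δ(1) = m·p^m`. -/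
noncomputable def deltaMultSub (p : ℕ) (H : Subgroup G) : G → ℂ :=
  fun h =>
    if h ∈ H then
      (if h = 1 then ((Nat.card H).factorization p : ℂ) * (Nat.card H : ℂ)
       else -((p : ℂ) ^ ((Nat.card H).factorization p - (orderOf h).factorization p + 1))
              / ((p : ℂ) - 1))
    else 0

end Characters

open Classical in
/-- The set of children (successors) of a vertex. -/
noncomputable def MetricRootedTree.children (T : MetricRootedTree) (v : T.V) : Finset T.V :=
  Finset.univ.filter (fun w => T.parent w = v ∧ w ≠ v)

/-- A Hurwitz tree of type `(G,p)`: a rooted metric tree with monodromy groups `G_v`,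
Artin characters `a_e` (attached to the target vertex of each edge) and depth characters
`δ_v`, subject to axioms (H1)–(H5) of Brewis–Wewers. -/
structure HurwitzTree (G : Type) [Group G] [Fintype G] (p : ℕ) extends MetricRootedTree where
  Gv : V → Subgroup G
  av : V → G → ℂ
  dv : V → G → ℂ
  -- (H1): monodromy groups decrease (up to conjugacy) along edges …
  h1_sub : ∀ v w, parent w = v → w ≠ v → ∃ g : G, ∀ x ∈ Gv w, g * x * g⁻¹ ∈ Gv v
  -- … with branching `Σ_{v → v'} [G_v : G_{v'}] > 1` at interior non-root vertices …
  h1_branch : ∀ v, v ≠ root → ¬ toMetricRootedTree.IsLeaf v →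
    1 < ∑ w ∈ toMetricRootedTree.children v, Nat.card (Gv v) / Nat.card (Gv w)
  -- … and monodromy group `G` at the root and at the target of the trunk.
  h1_root : Gv root = ⊤
  h1_trunk : Gv trunk = ⊤
  -- (H2): the monodromy group at each leaf is nontrivial and cyclic.
  h2 : ∀ b, toMetricRootedTree.IsLeaf b → Gv b ≠ ⊥ ∧ IsCyclic (Gv b)
  -- (H3): the Artin characters.
  h3_leaf : ∀ b, toMetricRootedTree.IsLeaf b → av b = indAug (Gv b)
  h3_inner : ∀ v, v ≠ root → ¬ toMetricRootedTree.IsLeaf v →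
    av v = fun g => ∑ w ∈ toMetricRootedTree.children v, av w g
  -- (H4): the depth characters, `δ_{t(e)} = δ_{s(e)} + ε_e·(a_e - (u_{G_{t(e)}})^*)`.
  h4 : ∀ v, v ≠ root →
    dv v = fun g => dv (parent v) g + (eps v : ℂ) * (av v g - indAug (Gv v) g)
  -- (H5): at each leaf, `δ_b` is induced from `δ^mult` of the Sylow `p`-subgroup of `G_b`.
  h5 : ∀ b, toMetricRootedTree.IsLeaf b → ∀ P : Subgroup G, P ≤ Gv b → IsPGroup p P →
    (∀ Q : Subgroup G, Q ≤ Gv b → IsPGroup p Q → Q ≤ P) →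
    dv b = indCF P (deltaMultSub p P)

namespace HurwitzTree

variable {G : Type} [Group G] [Fintype G] {p : ℕ} (T : HurwitzTree G p)

/-- The depth `δ_T` of a Hurwitz tree. -/
noncomputable def depth : G → ℂ := T.dv T.root

/-- The Artin character `a_T` of a Hurwitz tree (the Artin character of the trunk). -/
noncomputable def artin : G → ℂ := T.av T.trunk

end HurwitzTree

open Subgroup

/-!
Unwinding (H3) from the trunk down to the leaves writes `a_T` as the sum of the induced
augmentation characters `(u_{G_b})^*`, and by Frobenius reciprocity `⟨χ, (u_H)^*⟩` is `0` or `1`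
according as `H ≤ ker χ` or not. Every character of order two of `G = Q_{2^{n+1}}` factors
through the Klein four-group `G/⟨τ²⟩`, whose three non-trivial elements are the images of
`H₀, H₁, H₂`, and the image of a cyclic subgroup in it determines the subgroup's class among
the `[Hⱼ]`. Hence `⟨a_T, χᵢ⟩ = Σ_{j ≠ i} |Bⱼ|`, and the equations `|B₁| + |B₂| = 2`,
`|B₀| + |B₂| = |B₀| + |B₁| = k ≥ 2` force `|B₁| = |B₂| = 1` and `|B₀| = k - 1 ≥ 1`.
-/

namespace MetricRootedTree

variable (T : MetricRootedTree)

theorem iterate_parent_root (k : ℕ) : T.parent^[k] T.root = T.root :=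
  Function.iterate_fixed T.parent_root k

variable {T}

theorem eq_root_of_iterate_parent_eq {v : T.V} {k : ℕ} (hk : T.parent^[k + 1] v = v) :
    v = T.root := by
  obtain ⟨N, hN⟩ := T.reaches_root v
  have hper : T.parent^[(k + 1) * N] v = v := by
    rw [Function.iterate_mul]; exact Function.iterate_fixed hk N
  rw [← hper, add_mul, one_mul, Function.iterate_add_apply, hN, iterate_parent_root]

@[simp]
theorem mem_leaves {b : T.V} : b ∈ T.leaves ↔ T.IsLeaf b := by
  simp [leaves]

theorem le_of_parent_le {v w x : T.V} (hp : T.parent w = v) (h : T.le w x) : T.le v x := by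
  obtain ⟨k, hk⟩ := h
  exact ⟨k + 1, by rw [Function.iterate_succ_apply', hk, hp]⟩

theorem not_le_parent {v w : T.V} (hp : T.parent w = v) (hv : v ≠ T.root) : ¬ T.le w v := by
  rintro ⟨k, hk⟩
  exact hv (eq_root_of_iterate_parent_eq (by rw [Function.iterate_succ_apply', hk, hp]))

theorem le_parent_of_le_of_ne {u w : T.V} (h : T.le u w) (hne : u ≠ w) :
    T.le u (T.parent w) := by
  obtain ⟨_ | k, hk⟩ := h
  · exact absurd hk.symm hne
  · exact ⟨k, by rwa [← Function.iterate_succ_apply]⟩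

theorem le_total_of_le {u u' b : T.V} (h : T.le u b) (h' : T.le u' b) :
    T.le u u' ∨ T.le u' u := by
  obtain ⟨i, rfl⟩ := h
  obtain ⟨j, rfl⟩ := h'
  rcases le_total i j with hij | hij
  · exact Or.inr ⟨j - i, by rw [← Function.iterate_add_apply, Nat.sub_add_cancel hij]⟩
  · exact Or.inl ⟨i - j, by rw [← Function.iterate_add_apply, Nat.sub_add_cancel hij]⟩

theorem eq_of_isLeaf_of_le {v b : T.V} (hv : T.IsLeaf v) (h : T.le v b) : b = v := by
  obtain ⟨k, hk⟩ := h
  induction k generalizing b with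
  | zero => exact hk
  | succ k ih => exact ih (hv.2 _ (by rwa [Function.iterate_succ_apply'] at hk))

theorem exists_mem_children_le {v b : T.V} (h : T.le v b) (hne : b ≠ v) :
    ∃ w ∈ T.children v, T.le w b := by
  obtain ⟨k, hk⟩ := h
  induction k generalizing b with
  | zero => exact absurd hk hne
  | succ k ih =>
    rw [Function.iterate_succ_apply'] at hk
    by_cases hu : T.parent^[k] b = v
    · exact ih hne hu
    · exact ⟨_, by simp [children, hk, hu], k, rfl⟩

theorem eq_of_mem_children_of_le {v w₁ w₂ b : T.V} (hv : v ≠ T.root)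
    (h₁ : w₁ ∈ T.children v) (h₂ : w₂ ∈ T.children v) (hb₁ : T.le w₁ b) (hb₂ : T.le w₂ b) :
    w₁ = w₂ := by
  simp only [children, mem_filter, mem_univ, true_and] at h₁ h₂
  by_contra hne
  rcases le_total_of_le hb₁ hb₂ with h | h
  · exact not_le_parent h₁.1 hv (h₂.1 ▸ le_parent_of_le_of_ne h hne)
  · exact not_le_parent h₂.1 hv (h₁.1 ▸ le_parent_of_le_of_ne h (Ne.symm hne))

theorem ne_root_of_mem_children {v w : T.V} (hv : v ≠ T.root) (hw : w ∈ T.children v) :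
    w ≠ T.root := by
  rintro rfl
  simp only [children, mem_filter, mem_univ, true_and, T.parent_root] at hw
  exact hv hw.1.symm

theorem trunk_le {b : T.V} (hb : b ≠ T.root) : T.le T.trunk b := by
  obtain ⟨N, hN⟩ := T.reaches_root b
  induction N generalizing b with
  | zero => exact absurd hN hb
  | succ N ih =>
    rw [Function.iterate_succ_apply'] at hN
    by_cases hu : T.parent^[N] b = T.root
    · exact ih hb hu
    · exact ⟨N, T.trunk_unique _ hu hN⟩

open Classical in
theorem filter_le_ssubset_of_mem_children {v w : T.V} (hv : v ≠ T.root)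
    (hw : w ∈ T.children v) : univ.filter (T.le w) ⊂ univ.filter (T.le v) := by
  simp only [children, mem_filter, mem_univ, true_and] at hw
  refine ssubset_iff_of_subset (fun x hx => ?_) |>.2 ⟨v, by simpa using ⟨0, rfl⟩, ?_⟩
  · simp only [mem_filter, mem_univ, true_and] at hx ⊢
    exact le_of_parent_le hw.1 hx
  · simpa using not_le_parent hw.1 hv

open Classical in
theorem leaves_filter_le_of_isLeaf {v : T.V} (hv : T.IsLeaf v) :
    T.leaves.filter (T.le v) = {v} := by
  ext b
  simp only [mem_filter, mem_leaves, mem_singleton]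
  exact ⟨fun h => eq_of_isLeaf_of_le hv h.2, by rintro rfl; exact ⟨hv, 0, rfl⟩⟩

open Classical in
theorem leaves_filter_le_eq_biUnion {v : T.V} (hv : ¬ T.IsLeaf v) :
    T.leaves.filter (T.le v) = (T.children v).biUnion (fun w => T.leaves.filter (T.le w)) := by
  ext b
  simp only [mem_biUnion, mem_filter]
  constructor
  · rintro ⟨hb, hle⟩
    have hbv : b ≠ v := by rintro rfl; exact hv (mem_leaves.1 hb)
    obtain ⟨w, hw, hwb⟩ := exists_mem_children_le hle hbv
    exact ⟨w, hw, hb, hwb⟩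
  · rintro ⟨w, hw, hb, hwb⟩
    exact ⟨hb, le_of_parent_le (mem_filter.1 hw).2.1 hwb⟩

open Classical in
theorem pairwiseDisjoint_leaves_filter_le {v : T.V} (hv : v ≠ T.root) :
    (T.children v : Set T.V).PairwiseDisjoint (fun w => T.leaves.filter (T.le w)) :=
  fun _ h₁ _ h₂ hne => disjoint_left.2 fun _ hb₁ hb₂ =>
    hne (eq_of_mem_children_of_le hv h₁ h₂ (mem_filter.1 hb₁).2 (mem_filter.1 hb₂).2)

open Classical in
theorem eq_sum_leaves_of_eq_sum_children {M : Type*} [AddCommMonoid M] (f : T.V → M)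
    (hf : ∀ v, v ≠ T.root → ¬ T.IsLeaf v → f v = ∑ w ∈ T.children v, f w)
    {v : T.V} (hv : v ≠ T.root) : f v = ∑ b ∈ T.leaves.filter (T.le v), f b := by
  induction hN : #(univ.filter (T.le v)) using Nat.strong_induction_on generalizing v with
  | _ N ih =>
  by_cases hleaf : T.IsLeaf v
  · rw [leaves_filter_le_of_isLeaf hleaf, sum_singleton]
  · rw [hf v hv hleaf, leaves_filter_le_eq_biUnion hleaf,
      sum_biUnion (pairwiseDisjoint_leaves_filter_le hv)]
    refine sum_congr rfl fun w hw => ih _ ?_ (ne_root_of_mem_children hv hw) rfl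
    exact hN ▸ card_lt_card (filter_le_ssubset_of_mem_children hv hw)

end MetricRootedTree

section Characters

variable {G : Type} [Group G] [Fintype G]

omit [Group G] in
theorem innerCF_sum {ι : Type*} (s : Finset ι) (ψ : G → ℂ) (F : ι → G → ℂ) :
    innerCF ψ (∑ i ∈ s, F i) = ∑ i ∈ s, innerCF ψ (F i) := by
  simp only [innerCF, Finset.sum_apply, mul_sum]
  rw [sum_comm]

theorem innerCF_indCF {ψ : G → ℂ} (hψ : ∀ x g, ψ (x⁻¹ * g * x) = ψ g) (H : Subgroup G)
    (f : G → ℂ) :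
    innerCF ψ (indCF H f) = (Nat.card H : ℂ)⁻¹ * ∑ g : G, (starRingEnd ℂ) (ψ g) * f g := by
  have hconj : ∀ x : G, ∑ g : G, (starRingEnd ℂ) (ψ g) * f (x⁻¹ * g * x) =
      ∑ g : G, (starRingEnd ℂ) (ψ g) * f g := fun x =>
    Fintype.sum_equiv (MulAut.conj x⁻¹).toEquiv _ _ fun g => by
      simp only [MulEquiv.toEquiv_eq_coe, MulEquiv.coe_toEquiv, MulAut.conj_apply, inv_inv, hψ]
  have hsum : ∑ g : G, (starRingEnd ℂ) (ψ g) * indCF H f g =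
      (Nat.card H : ℂ)⁻¹ * ∑ x : G, ∑ g : G, (starRingEnd ℂ) (ψ g) * f (x⁻¹ * g * x) := by
    simp only [indCF, mul_sum]
    rw [sum_comm]
    exact sum_congr rfl fun _ _ => sum_congr rfl fun _ _ => by ring
  rw [innerCF, hsum, sum_congr rfl fun x _ => hconj x, sum_const, card_univ, nsmul_eq_mul]
  field_simp

open Classical in
theorem sum_mul_augChar (ψ : G → ℂ) (H : Subgroup G) :
    ∑ g : G, ψ g * augChar H g = Nat.card H * ψ 1 - ∑ g ∈ univ.filter (· ∈ H), ψ g := by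
  have h : ∀ g, ψ g * augChar H g =
      (if g = 1 then Nat.card H * ψ 1 else 0) - (if g ∈ H then ψ g else 0) := by
    intro g
    by_cases hg : g = 1
    · subst hg; simp [augChar]; ring
    · by_cases hgH : g ∈ H <;> simp [augChar, hg, hgH]
  simp only [h, sum_sub_distrib, sum_ite_eq', mem_univ, if_true, sum_filter]

open Classical in
theorem sum_filter_mem_units_coe (χ : G →* ℂˣ) (H : Subgroup G) :
    ∑ g ∈ univ.filter (· ∈ H), (χ g : ℂ) = if H ≤ χ.ker then (Nat.card H : ℂ) else 0 := by
  have hf : (Units.coeHom ℂ).comp (χ.comp H.subtype) = 1 ↔ H ≤ χ.ker := by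
    simp [DFunLike.ext_iff, SetLike.le_def]
  have := sum_hom_units ((Units.coeHom ℂ).comp (χ.comp H.subtype))
  rw [sum_subtype (univ.filter (· ∈ H)) (p := (· ∈ H)) (by simp), Nat.card_eq_fintype_card]
  simpa [hf, apply_ite] using this

open Classical in
theorem innerCF_indAug (χ : G →* ℂˣ) (H : Subgroup G) :
    innerCF (fun g => (χ g : ℂ)) (indAug H) = if H ≤ χ.ker then 0 else 1 := by
  have hclass : ∀ x g, (χ (x⁻¹ * g * x) : ℂ) = χ g := fun x g => by
    simp [mul_comm]
  rw [indAug, innerCF_indCF hclass, sum_mul_augChar, ← map_sum, sum_filter_mem_units_coe]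
  split_ifs <;> simp

end Characters

namespace HurwitzTree

variable {G : Type} [Group G] [Fintype G] {p : ℕ} (T : HurwitzTree G p)

theorem artin_eq_sum_indAug :
    T.artin = ∑ b ∈ T.toMetricRootedTree.leaves, indAug (T.Gv b) := by
  classical
  have hinner : ∀ v, v ≠ T.root → ¬ T.IsLeaf v → T.av v = ∑ w ∈ T.children v, T.av w :=
    fun v hv hleaf => by rw [T.h3_inner v hv hleaf]; ext g; simp [Finset.sum_apply]
  rw [artin, T.eq_sum_leaves_of_eq_sum_children T.av hinner T.trunk_ne,
    filter_true_of_mem fun b hb => T.trunk_le (T.mem_leaves.1 hb).1]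
  exact sum_congr rfl fun b hb => T.h3_leaf b (T.mem_leaves.1 hb)

open Classical in
theorem innerCF_artin (χ : G →* ℂˣ) :
    innerCF (fun g => (χ g : ℂ)) T.artin =
      #(T.toMetricRootedTree.leaves.filter fun b => ¬ T.Gv b ≤ χ.ker) := by
  simp only [artin_eq_sum_indAug, innerCF_sum, innerCF_indAug, card_filter]
  push_cast
  exact sum_congr rfl fun b _ => by split_ifs <;> simp

end HurwitzTree

/-- The paper's `[H] = [⟨x⟩]`. -/
abbrev Subgroup.IsConjZpowers {G : Type*} [Group G] (H : Subgroup G) (x : G) : Prop :=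
  ∃ g, H = Subgroup.map (MulAut.conj g).toMonoidHom (zpowers x)

theorem MonoidHom.apply_eq_one_of_apply_eq {G H M : Type*} [Group G] [Group H] [Monoid M]
    (κ : G →* H) {χ : G →* M} (hκχ : κ.ker ≤ χ.ker) {u g : G} (hu : χ u = 1)
    (hg : κ g = κ u) : χ g = 1 := by
  have hker : u⁻¹ * g ∈ κ.ker := by simp [hg]
  rw [← mul_inv_cancel_left u g, map_mul, hu, one_mul]
  exact hκχ hker

section KleinFour

variable {G V : Type*} [Group G] [CommGroup V] [IsKleinFour V] (κ : G →* V)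

theorem IsKleinFour.zpow_eq_one_or_eq (v : V) (k : ℤ) : v ^ k = 1 ∨ v ^ k = v := by
  rw [zpow_eq_zpow_emod' k (by rw [sq, IsKleinFour.mul_self] : v ^ 2 = 1)]
  rcases Int.emod_two_eq_zero_or_one k with h | h <;> simp [h]

theorem MonoidHom.apply_eq_of_isConjZpowers {h x : G} (hx : κ x ≠ 1)
    (hhx : (zpowers h).IsConjZpowers x) : κ h = κ x := by
  obtain ⟨g, hg⟩ := hhx
  have hmem : g * x * g⁻¹ ∈ zpowers h := hg ▸ mem_map_of_mem _ (mem_zpowers x)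
  obtain ⟨k, hk⟩ := mem_zpowers_iff.1 hmem
  have hκ : κ h ^ k = κ x := by
    rw [← map_zpow, hk, map_mul, map_mul, map_inv, mul_inv_cancel_comm]
  rcases IsKleinFour.zpow_eq_one_or_eq (κ h) k with h1 | h1
  · exact absurd (hκ ▸ h1) hx
  · exact h1 ▸ hκ

variable {M : Type*} [Monoid M] {χ : G →* M}

theorem MonoidHom.apply_eq_one_iff_of_ker_le (hκχ : κ.ker ≤ χ.ker) (hχ : χ ≠ 1) {x : G}
    (hx : χ x = 1) (hκx : κ x ≠ 1) (h : G) : χ h = 1 ↔ κ h = 1 ∨ κ h = κ x := by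
  refine ⟨fun hh => ?_, ?_⟩
  · by_contra! hne
    -- otherwise `1, κ x, κ h, κ x * κ h` exhaust `V`, so `χ` would be trivial
    refine hχ (MonoidHom.ext fun g => ?_)
    by_cases h1 : κ g = 1
    · exact hκχ h1
    by_cases h2 : κ g = κ x
    · exact κ.apply_eq_one_of_apply_eq hκχ hx h2
    by_cases h3 : κ g = κ h
    · exact κ.apply_eq_one_of_apply_eq hκχ hh h3
    refine κ.apply_eq_one_of_apply_eq hκχ (u := x * h) (by rw [map_mul, hx, hh, one_mul]) ?_
    rw [map_mul]
    exact IsKleinFour.eq_mul_of_ne_all hκx hne.1 (Ne.symm hne.2) h1 h2 h3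
  · rintro (h1 | h1)
    · exact hκχ h1
    · exact κ.apply_eq_one_of_apply_eq hκχ hx h1

end KleinFour

theorem ZMod.exists_eq_two_mul {n : ℕ} (hn : 2 ∣ n) {i : ZMod n} (hi : (i.cast : ZMod 2) = 0) :
    ∃ k, i = 2 * k := by
  rw [← ZMod.intCast_zmod_cast i, ZMod.cast_intCast hn, ZMod.intCast_zmod_eq_zero_iff_dvd] at hi
  obtain ⟨k, hk⟩ := hi
  exact ⟨k, by rw [← ZMod.intCast_zmod_cast i, hk]; push_cast; ring⟩

namespace QuaternionGroup

variable {m : ℕ}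

/-- Reduction modulo `⟨a 2⟩`; for even `m` this is the abelianization of `Q_{4m}`. -/
def kleinQuotient (hm : Even m) : QuaternionGroup m →* Multiplicative (ZMod 2 × ZMod 2) where
  toFun
    | a i => .ofAdd (0, ZMod.castHom (dvd_mul_right 2 m) (ZMod 2) i)
    | xa i => .ofAdd (1, ZMod.castHom (dvd_mul_right 2 m) (ZMod 2) i)
  map_one' := by rw [one_def]; simp
  map_mul' := by
    have hm' : (m : ZMod 2) = 0 := ZMod.natCast_eq_zero_iff_even.2 hm
    have h11 : (1 : ZMod 2) + 1 = 0 := rfl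
    rintro (i | i) (j | j) <;> simp only [a_mul_a, a_mul_xa, xa_mul_a, xa_mul_xa, ← ofAdd_add]
    all_goals congr 1; ext <;> simp [hm', h11, sub_eq_add_neg, ZMod.neg_eq_self_mod_two, add_comm]

variable (hm : Even m)

@[simp]
theorem kleinQuotient_a (i : ZMod (2 * m)) :
    kleinQuotient hm (a i) = .ofAdd (0, (i.cast : ZMod 2)) := rfl

@[simp]
theorem kleinQuotient_xa (i : ZMod (2 * m)) :
    kleinQuotient hm (xa i) = .ofAdd (1, (i.cast : ZMod 2)) := rfl

theorem ker_kleinQuotient_le {M : Type*} [CommMonoid M] {χ : QuaternionGroup m →* M}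
    (hχ : χ ^ 2 = 1) : (kleinQuotient hm).ker ≤ χ.ker := by
  rintro (i | i) hi
  · obtain ⟨k, rfl⟩ := ZMod.exists_eq_two_mul (dvd_mul_right 2 m) (by simpa using hi)
    rw [MonoidHom.mem_ker, show a (2 * k) = a k ^ 2 by rw [sq, a_mul_a, two_mul], map_pow,
      ← MonoidHom.pow_apply, hχ, MonoidHom.one_apply]
  · simp at hi

theorem zpowers_eq_zpowers_a_one_of_kleinQuotient_eq {e : ℕ} (he : 2 * m = 2 ^ e)
    {h : QuaternionGroup m} (hh : kleinQuotient hm h = kleinQuotient hm (a 1)) :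
    zpowers h = zpowers (a 1) := by
  have : NeZero m := ⟨by rintro rfl; exact pow_ne_zero e two_ne_zero he.symm⟩
  obtain ⟨i, rfl⟩ : ∃ i, h = a i := by
    cases h with
    | a i => exact ⟨i, rfl⟩
    | xa j => simp only [kleinQuotient_xa, kleinQuotient_a] at hh; simp at hh
  have hodd : Odd i.val := by
    simp only [kleinQuotient_a, EmbeddingLike.apply_eq_iff_eq, Prod.mk.injEq, true_and,
      ZMod.cast_one (dvd_mul_right 2 m), ZMod.cast_eq_val] at hh
    exact ZMod.natCast_eq_one_iff_odd.1 hh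
  have hle : zpowers (a i) ≤ zpowers (a 1) := by
    rw [zpowers_le, ← ZMod.natCast_zmod_val i, ← a_one_pow]
    exact pow_mem (mem_zpowers _) _
  refine eq_of_le_of_card_ge hle ?_
  have hgcd : (2 * m).gcd i.val = 1 := by
    have := (hodd.coprime_two_left.pow_left e).gcd_eq_one
    rwa [← he] at this
  rw [Nat.card_zpowers, Nat.card_zpowers, orderOf_a_one, orderOf_a, hgcd, Nat.div_one]

theorem exists_conj_eq_xa_of_kleinQuotient_eq {h : QuaternionGroup m} {r : ZMod (2 * m)}
    (hh : kleinQuotient hm h = kleinQuotient hm (xa r)) : ∃ g, h = g * xa r * g⁻¹ := by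
  obtain ⟨j, rfl⟩ : ∃ j, h = xa j := by
    cases h with
    | a i => simp only [kleinQuotient_xa, kleinQuotient_a] at hh; simp at hh
    | xa j => exact ⟨j, rfl⟩
  have hjr : ((r - j).cast : ZMod 2) = 0 := by
    simp only [kleinQuotient_xa, EmbeddingLike.apply_eq_iff_eq, Prod.mk.injEq, true_and] at hh
    rw [ZMod.cast_sub (dvd_mul_right 2 m), hh, sub_self]
  obtain ⟨t, ht⟩ := ZMod.exists_eq_two_mul (dvd_mul_right 2 m) hjr
  refine ⟨a t, ?_⟩
  show xa j = a t * xa r * a (-t)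
  rw [a_mul_xa, xa_mul_a]
  congr 1
  linear_combination -ht

/-- `basicGen i` generates the subgroup `Hᵢ`: `τ = a 1`, `σ = xa 0` and `στ`. -/
def basicGen : Fin 3 → QuaternionGroup m := ![a 1, xa 0, xa 0 * a 1]

theorem kleinQuotient_basicGen (i : Fin 3) :
    kleinQuotient hm (basicGen i) = ![.ofAdd (0, 1), .ofAdd (1, 0), .ofAdd (1, 1)] i := by
  fin_cases i <;> simp [basicGen, ZMod.cast_one (dvd_mul_right 2 m)]

theorem kleinQuotient_basicGen_ne_one (i : Fin 3) : kleinQuotient hm (basicGen i) ≠ 1 := by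
  rw [kleinQuotient_basicGen]; fin_cases i <;> decide

theorem isConjZpowers_basicGen_iff {e : ℕ} (he : 2 * m = 2 ^ e) (h : QuaternionGroup m)
    (j : Fin 3) : (zpowers h).IsConjZpowers (basicGen j) ↔
      kleinQuotient hm h = kleinQuotient hm (basicGen j) := by
  refine ⟨(kleinQuotient hm).apply_eq_of_isConjZpowers (kleinQuotient_basicGen_ne_one hm j),
    fun hh => ?_⟩
  have hconj : ∀ {x : QuaternionGroup m}, (∃ g, h = g * x * g⁻¹) →
      (zpowers h).IsConjZpowers x := by
    rintro x ⟨g, rfl⟩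
    exact ⟨g, by rw [MonoidHom.map_zpowers]; rfl⟩
  match j, hh with
  | 0, hh =>
    refine ⟨1, ?_⟩
    rw [zpowers_eq_zpowers_a_one_of_kleinQuotient_eq hm he hh, MonoidHom.map_zpowers]
    simp [basicGen]
  | 1, hh => exact hconj (exists_conj_eq_xa_of_kleinQuotient_eq hm hh)
  | 2, hh =>
    rw [show basicGen 2 = (xa 1 : QuaternionGroup m) by simp [basicGen, xa_mul_a]] at hh ⊢
    exact hconj (exists_conj_eq_xa_of_kleinQuotient_eq hm hh)

theorem eq_of_isConjZpowers_basicGen (hm : Even m) {H : Subgroup (QuaternionGroup m)}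
    {j j' : Fin 3} (hj : H.IsConjZpowers (basicGen j)) (hj' : H.IsConjZpowers (basicGen j')) :
    j = j' := by
  obtain ⟨g, rfl⟩ := hj
  rw [MonoidHom.map_zpowers] at hj'
  have hκ := (kleinQuotient hm).apply_eq_of_isConjZpowers (kleinQuotient_basicGen_ne_one hm j') hj'
  rw [MulEquiv.coe_toMonoidHom, MulAut.conj_apply, map_mul, map_mul, map_inv, mul_inv_cancel_comm,
    kleinQuotient_basicGen, kleinQuotient_basicGen] at hκ
  clear hj'
  revert j j'
  decide

theorem apply_eq_one_iff {M : Type*} [CommMonoid M] {χ : QuaternionGroup m →* M}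
    (hχ : orderOf χ = 2) {i : Fin 3} (hi : χ (basicGen i) = 1) (h : QuaternionGroup m) :
    χ h = 1 ↔ kleinQuotient hm h = 1 ∨ kleinQuotient hm h = kleinQuotient hm (basicGen i) :=
  (kleinQuotient hm).apply_eq_one_iff_of_ker_le
    (ker_kleinQuotient_le hm (hχ ▸ pow_orderOf_eq_one χ)) (fun h1 => by simp [h1] at hχ) hi
    (kleinQuotient_basicGen_ne_one hm i) h

theorem not_le_ker_iff (hm : Even m) {e : ℕ} (he : 2 * m = 2 ^ e) {M : Type*} [CommMonoid M]
    {χ : QuaternionGroup m →* M} (hχ : orderOf χ = 2) {i : Fin 3} (hi : χ (basicGen i) = 1)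
    (H : Subgroup (QuaternionGroup m)) [IsCyclic H] :
    ¬ H ≤ χ.ker ↔ ∃ j ≠ i, H.IsConjZpowers (basicGen j) := by
  obtain ⟨h, rfl⟩ := (H.isCyclic_iff_exists_zpowers_eq_top).1 ‹_›
  have hV : ∀ (v : Multiplicative (ZMod 2 × ZMod 2)) (i : Fin 3),
      (¬ (v = 1 ∨ v = ![.ofAdd (0, 1), .ofAdd (1, 0), .ofAdd (1, 1)] i)) ↔
        ∃ j ≠ i, v = ![.ofAdd (0, 1), .ofAdd (1, 0), .ofAdd (1, 1)] j := by
    decide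
  simp only [zpowers_le, MonoidHom.mem_ker, apply_eq_one_iff hm hχ hi,
    isConjZpowers_basicGen_iff hm he, kleinQuotient_basicGen, hV]

theorem card_filter_not_le_ker (hm : Even m) {e : ℕ} (he : 2 * m = 2 ^ e) {M : Type*}
    [CommMonoid M] {χ : QuaternionGroup m →* M} (hχ : orderOf χ = 2) {i : Fin 3}
    (hi : χ (basicGen i) = 1) {ι : Type*} (s : Finset ι) (H : ι → Subgroup (QuaternionGroup m))
    (hH : ∀ b ∈ s, IsCyclic (H b)) [DecidablePred fun b => ¬ H b ≤ χ.ker]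
    [∀ j, DecidablePred fun b => (H b).IsConjZpowers (basicGen j)] :
    #(s.filter fun b => ¬ H b ≤ χ.ker) = ∑ j ∈ univ.erase i,
      #(s.filter fun b => (H b).IsConjZpowers (basicGen j)) := by
  classical
  rw [← card_biUnion]
  · congr 1
    ext b
    simp only [mem_filter, mem_biUnion, mem_erase, ne_eq, mem_univ, and_true]
    constructor
    · rintro ⟨hb, hker⟩
      have := hH b hb
      obtain ⟨j, hj, hconj⟩ := (not_le_ker_iff hm he hχ hi (H b)).1 hker
      exact ⟨j, hj, hb, hconj⟩
    · rintro ⟨j, hj, hb, hconj⟩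
      have := hH b hb
      exact ⟨hb, (not_le_ker_iff hm he hχ hi (H b)).2 ⟨j, hj, hconj⟩⟩
  · exact fun j _ j' _ hne => disjoint_filter.2 fun b _ hj hj' =>
      hne (eq_of_isConjZpowers_basicGen hm hj hj')

end QuaternionGroup

open Classical in
theorem HurwitzTree.innerCF_artin_eq_sum_erase_card {m : ℕ} [NeZero m] (hm : Even m) {e : ℕ}
    (he : 2 * m = 2 ^ e) {p : ℕ} (T : HurwitzTree (QuaternionGroup m) p)
    {χ : QuaternionGroup m →* ℂˣ} (hχ : orderOf χ = 2) {i : Fin 3}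
    (hi : χ (QuaternionGroup.basicGen i) = 1) :
    innerCF (fun g => (χ g : ℂ)) T.artin = ((∑ j ∈ univ.erase i, #(T.leaves.filter fun b =>
      (T.Gv b).IsConjZpowers (QuaternionGroup.basicGen j)) : ℕ) : ℂ) := by
  rw [T.innerCF_artin, QuaternionGroup.card_filter_not_le_ker hm he hχ hi _ _
    fun b hb => (T.h2 b (T.mem_leaves.1 hb)).2]

theorem Fin.eq_one_and_eq_one_and_one_le_of_sum_erase {f : Fin 3 → ℕ} {k : ℕ} (hk : 2 ≤ k)
    (h₀ : ∑ j ∈ univ.erase 0, f j = 2) (h₁ : ∑ j ∈ univ.erase 1, f j = k)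
    (h₂ : ∑ j ∈ univ.erase 2, f j = k) : f 1 = 1 ∧ f 2 = 1 ∧ 1 ≤ f 0 := by
  rw [show univ.erase (0 : Fin 3) = {1, 2} by decide, sum_pair (by decide)] at h₀
  rw [show univ.erase (1 : Fin 3) = {0, 2} by decide, sum_pair (by decide)] at h₁
  rw [show univ.erase (2 : Fin 3) = {0, 1} by decide, sum_pair (by decide)] at h₂
  omega

open Classical in
theorem stmt17_general (n : ℕ) (hn : 2 ≤ n)
    (χ₀ χ₁ χ₂ : QuaternionGroup (2 ^ (n - 1)) →* ℂˣ)
    (hχ₀ : orderOf χ₀ = 2) (hχ₁ : orderOf χ₁ = 2) (hχ₂ : orderOf χ₂ = 2)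
    (hk₀ : zpowers (QuaternionGroup.a 1) ≤ χ₀.ker)
    (hk₁ : zpowers (QuaternionGroup.xa 0) ≤ χ₁.ker)
    (hk₂ : zpowers (QuaternionGroup.xa 0 * QuaternionGroup.a 1) ≤ χ₂.ker)
    (T : HurwitzTree (QuaternionGroup (2 ^ (n - 1))) 2)
    (ha₀ : innerCF (fun g => (χ₀ g : ℂ)) T.artin = 2)
    (k : ℕ) (hk : 2 ≤ k)
    (ha₁ : innerCF (fun g => (χ₁ g : ℂ)) T.artin = k)
    (ha₂ : innerCF (fun g => (χ₂ g : ℂ)) T.artin = k) :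
    (T.toMetricRootedTree.leaves.filter (fun b => ∃ g, T.Gv b =
        Subgroup.map (MulAut.conj g).toMonoidHom (zpowers (QuaternionGroup.xa 0)))).card = 1 ∧
    (T.toMetricRootedTree.leaves.filter (fun b => ∃ g, T.Gv b =
        Subgroup.map (MulAut.conj g).toMonoidHom
          (zpowers (QuaternionGroup.xa 0 * QuaternionGroup.a 1)))).card = 1 ∧
    1 ≤ (T.toMetricRootedTree.leaves.filter (fun b => ∃ g, T.Gv b =
        Subgroup.map (MulAut.conj g).toMonoidHom (zpowers (QuaternionGroup.a 1)))).card := by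
  have hm : Even (2 ^ (n - 1)) := (Nat.even_pow' (by omega)).2 even_two
  have he : 2 * 2 ^ (n - 1) = 2 ^ n := by rw [← pow_succ']; congr 1; omega
  refine Fin.eq_one_and_eq_one_and_one_le_of_sum_erase (f := fun j => #(T.leaves.filter fun b =>
    (T.Gv b).IsConjZpowers (QuaternionGroup.basicGen j))) hk ?_ ?_ ?_
  · have h := T.innerCF_artin_eq_sum_erase_card hm he hχ₀ (i := 0) (hk₀ (mem_zpowers _))
    exact_mod_cast h.symm.trans ha₀
  · have h := T.innerCF_artin_eq_sum_erase_card hm he hχ₁ (i := 1) (hk₁ (mem_zpowers _))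
    exact_mod_cast h.symm.trans ha₁
  · have h := T.innerCF_artin_eq_sum_erase_card hm he hχ₂ (i := 2) (hk₂ (mem_zpowers _))
    exact_mod_cast h.symm.trans ha₂

open Classical in
/-- Let `G = Q_{2^{n+1}}` (`n ≥ 2`) and let `T` be a Hurwitz tree of type `(G,2)` with
`δ_T = 0`, `⟨a_T, χ₀⟩ = 2` and `⟨a_T, χ₁⟩ = ⟨a_T, χ₂⟩ ≥ 2`, where `χᵢ` is the order-`2`
character of `G` whose kernel contains `Hᵢ` (`H₀ = ⟨τ⟩`, `H₁ = ⟨σ⟩`, `H₂ = ⟨στ⟩`).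
Then, with `Bᵢ = {leaves b : [G_b] = [Hᵢ]}`, one has `|B₁| = |B₂| = 1` and `|B₀| ≥ 1`. -/
theorem stmt17 (n : ℕ) (hn : 2 ≤ n)
    (χ₀ χ₁ χ₂ : QuaternionGroup (2 ^ (n - 1)) →* ℂˣ)
    (hχ₀ : orderOf χ₀ = 2) (hχ₁ : orderOf χ₁ = 2) (hχ₂ : orderOf χ₂ = 2)
    (hk₀ : zpowers (QuaternionGroup.a 1) ≤ χ₀.ker)
    (hk₁ : zpowers (QuaternionGroup.xa 0) ≤ χ₁.ker)
    (hk₂ : zpowers (QuaternionGroup.xa 0 * QuaternionGroup.a 1) ≤ χ₂.ker)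
    (T : HurwitzTree (QuaternionGroup (2 ^ (n - 1))) 2)
    (hδ : T.depth = 0)
    (ha₀ : innerCF (fun g => (χ₀ g : ℂ)) T.artin = 2)
    (k : ℕ) (hk : 2 ≤ k)
    (ha₁ : innerCF (fun g => (χ₁ g : ℂ)) T.artin = k)
    (ha₂ : innerCF (fun g => (χ₂ g : ℂ)) T.artin = k) :
    (T.toMetricRootedTree.leaves.filter (fun b => ∃ g, T.Gv b =
        Subgroup.map (MulAut.conj g).toMonoidHom (zpowers (QuaternionGroup.xa 0)))).card = 1 ∧
    (T.toMetricRootedTree.leaves.filter (fun b => ∃ g, T.Gv b =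
        Subgroup.map (MulAut.conj g).toMonoidHom
          (zpowers (QuaternionGroup.xa 0 * QuaternionGroup.a 1)))).card = 1 ∧
    1 ≤ (T.toMetricRootedTree.leaves.filter (fun b => ∃ g, T.Gv b =
        Subgroup.map (MulAut.conj g).toMonoidHom (zpowers (QuaternionGroup.a 1)))).card :=
  stmt17_general n hn χ₀ χ₁ χ₂ hχ₀ hχ₁ hχ₂ hk₀ hk₁ hk₂ T ha₀ k hk ha₁ ha₂
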